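/- arXiv:2602.17086 — 3 statements merged into one kernel-verified Lean document; each statement's English description precedes it below -/
import Mathlib

section
/- Let m ≥ 2, let μ be a probability measure on ℝ that is atomless and symmetric about 0 (i.e. invariant under negation), and let A be a random (m−1)×m real matrix whose entries are i.i.d. with law μ. Then almost surely rank(A) = m−1 (so ker(A) is one-dimensional), and the probability that ker(A) intersects the standard simplex Δ^m = {x ∈ ℝ^m : x_i ≥ 0 for all i, Σ_{i=1}^m x_i = 1} equals 2^{1−m}. -/
set_option autoImplicit false
set_option maxHeartbeats 1000000
set_option linter.unusedSectionVars false
set_option linter.unnecessarySimpa false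

open MeasureTheory ProbabilityTheory


lemma measurable_mveval {ι : Type*} [Fintype ι] (p : MvPolynomial ι ℝ) :
    Measurable fun x : ι → ℝ => MvPolynomial.eval x p :=
  (MvPolynomial.continuous_eval (p := p)).measurable

lemma poly_null_fin (μ : Measure ℝ) [IsProbabilityMeasure μ] [NullSingletonClass μ] :
    ∀ (n : ℕ) (p : MvPolynomial (Fin n) ℝ), p ≠ 0 →
      Measure.pi (fun _ : Fin n => μ) {x | MvPolynomial.eval x p = 0} = 0 := by
  intro n
  induction n with
  | zero =>
    intro p hp
    convert measure_empty (μ := Measure.pi (fun _ : Fin 0 => μ))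
    ext x
    simp only [Set.mem_setOf_eq, Set.mem_empty_iff_false, iff_false]
    intro hx
    exact hp (MvPolynomial.funext fun y => by
      have : y = x := Subsingleton.elim _ _
      simp [this, hx])
  | succ n ih =>
    intro p hp
    set q : Polynomial (MvPolynomial (Fin n) ℝ) := MvPolynomial.finSuccEquiv ℝ n p with hq
    have hq0 : q ≠ 0 := by
      simp only [hq, ne_eq, EmbeddingLike.map_eq_zero_iff]; exact hp
    have hlead : q.leadingCoeff ≠ 0 := Polynomial.leadingCoeff_ne_zero.mpr hq0
    set ν : Measure (Fin n → ℝ) := Measure.pi (fun _ => μ) with hν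
    set S := {x : Fin (n+1) → ℝ | MvPolynomial.eval x p = 0} with hSdef
    have hS : MeasurableSet S := (measurable_mveval p) (measurableSet_singleton 0)
    have hE := MeasureTheory.measurePreserving_piFinSuccAbove (fun _ : Fin (n+1) => μ) 0
    set e := MeasurableEquiv.piFinSuccAbove (fun _ : Fin (n+1) => ℝ) 0 with he
    have hT : MeasurableSet (e.symm ⁻¹' S) := e.symm.measurable hS
    have hpi : Measure.pi (fun _ : Fin (n+1) => μ) S = (μ.prod ν) (e.symm ⁻¹' S) :=
      ((hE.symm e).measure_preimage hS.nullMeasurableSet).symm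
    rw [hpi, ← Measure.prod_swap, Measure.map_apply measurable_swap hT,
      Measure.measure_prod_null (measurable_swap hT)]
    -- now a.e. section
    have hae : ∀ᵐ s ∂ν, MvPolynomial.eval s q.leadingCoeff ≠ 0 := by
      have := ih q.leadingCoeff hlead
      filter_upwards [measure_eq_zero_iff_ae_notMem.mp this] with s hs
      simpa using hs
    filter_upwards [hae] with s hs
    have hfin : {y : ℝ | (s, y) ∈ Prod.swap ⁻¹' (e.symm ⁻¹' S)}.Finite := by
      have hmapne : q.map (MvPolynomial.eval s) ≠ 0 := by
        intro h
        apply hs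
        have h2 : (q.map (MvPolynomial.eval s)).coeff q.natDegree
            = MvPolynomial.eval s (q.coeff q.natDegree) :=
          Polynomial.coeff_map _ _
        rw [h, Polynomial.coeff_zero] at h2
        rw [Polynomial.leadingCoeff]
        exact h2.symm
      have : {y : ℝ | (s, y) ∈ Prod.swap ⁻¹' (e.symm ⁻¹' S)}
          = {y | Polynomial.IsRoot (q.map (MvPolynomial.eval s)) y} := by
        ext y
        simp only [Set.mem_preimage, Prod.swap_prod_mk, Set.mem_setOf_eq, hSdef]
        have hsymm : e.symm (y, s) = Fin.cons y s := by
          simp only [he, MeasurableEquiv.piFinSuccAbove, MeasurableEquiv.symm_mk,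
            MeasurableEquiv.coe_mk, Equiv.symm_symm]
          exact Fin.insertNth_zero' y s
        rw [hsymm, MvPolynomial.eval_eq_eval_mv_eval']
        rfl
      rw [this]
      exact Polynomial.finite_setOf_isRoot hmapne
    exact hfin.measure_zero μ

lemma poly_null {ι : Type*} [Fintype ι] (μ : Measure ℝ) [IsProbabilityMeasure μ] [NullSingletonClass μ]
    (p : MvPolynomial ι ℝ) (hp : p ≠ 0) :
    Measure.pi (fun _ : ι => μ) {x | MvPolynomial.eval x p = 0} = 0 := by
  classical
  obtain ⟨f⟩ := Fintype.truncEquivFin ι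
  -- f : ι ≃ Fin (card ι)
  set q : MvPolynomial (Fin (Fintype.card ι)) ℝ := MvPolynomial.rename f p with hqdef
  have hq : q ≠ 0 := fun h => hp (by
    have := MvPolynomial.rename_injective (R := ℝ) f f.injective
    exact this (by simpa [hqdef] using h))
  have hE := MeasureTheory.measurePreserving_piCongrLeft (fun _ : ι => μ) f.symm
  set e := MeasurableEquiv.piCongrLeft (fun _ : ι => ℝ) f.symm with he
  have hS : MeasurableSet {x : ι → ℝ | MvPolynomial.eval x p = 0} :=
    (measurable_mveval p) (measurableSet_singleton 0)
  have hpre : e ⁻¹' {x : ι → ℝ | MvPolynomial.eval x p = 0}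
      = {x : Fin (Fintype.card ι) → ℝ | MvPolynomial.eval x q = 0} := by
    ext x
    simp only [Set.mem_preimage, Set.mem_setOf_eq, hqdef, MvPolynomial.eval_rename]
    have : (⇑e x) = x ∘ f := by
      funext i
      simp [he, MeasurableEquiv.piCongrLeft, Equiv.piCongrLeft]
    rw [this]
  calc Measure.pi (fun _ : ι => μ) {x | MvPolynomial.eval x p = 0}
      = Measure.pi (fun _ : Fin (Fintype.card ι) => μ)
        (e ⁻¹' {x | MvPolynomial.eval x p = 0}) :=
        (hE.measure_preimage hS.nullMeasurableSet).symm
    _ = 0 := by rw [hpre]; exact poly_null_fin μ _ q hq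

section Flip
variable {ι : Type*} [Fintype ι]

lemma flip_measurable (ε : ι → ℝ) :
    Measurable (fun a : ι → ℝ => fun i => ε i * a i) :=
  measurable_pi_lambda _ fun i => by fun_prop

lemma flip_preserving (μ : Measure ℝ) [IsProbabilityMeasure μ]
    (hsymm : Measure.map (fun x : ℝ => -x) μ = μ)
    (ε : ι → ℝ) (hε : ∀ i, ε i = 1 ∨ ε i = -1) :
    MeasurePreserving (fun a : ι → ℝ => fun i => ε i * a i)
      (Measure.pi fun _ => μ) (Measure.pi fun _ => μ) := by
  refine ⟨flip_measurable ε, ?_⟩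
  refine (Measure.pi_eq fun s hs => ?_).symm
  rw [Measure.map_apply (flip_measurable ε) (MeasurableSet.univ_pi hs)]
  have hpre : (fun a : ι → ℝ => fun i => ε i * a i) ⁻¹' Set.pi Set.univ s
      = Set.pi Set.univ (fun i => (fun x => ε i * x) ⁻¹' s i) := by
    ext a; simp [Set.mem_pi]
  rw [hpre, Measure.pi_pi]
  refine Finset.prod_congr rfl fun i _ => ?_
  rcases hε i with h | h
  · simp [h]
  · have : (fun x : ℝ => ε i * x) = fun x => -x := by funext x; rw [h]; ring
    rw [this, ← Measure.map_apply measurable_neg (hs i), hsymm]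
end Flip

section Alg
variable {n : ℕ}

/-- matrix from coordinates -/
def Mof (a : Fin n × Fin (n+1) → ℝ) : Matrix (Fin n) (Fin (n+1)) ℝ :=
  Matrix.of fun i j => a (i, j)

/-- signed maximal minors -/
noncomputable def cvec (a : Fin n × Fin (n+1) → ℝ) (j : Fin (n+1)) : ℝ :=
  (-1)^(j:ℕ) * ((Mof a).submatrix id j.succAbove).det

lemma continuous_cvec (j : Fin (n+1)) : Continuous (fun a => cvec (n := n) a j) := by
  apply Continuous.mul continuous_const
  apply Continuous.matrix_det
  apply continuous_matrix
  intro i k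
  exact continuous_apply _

lemma mulVec_cvec (a : Fin n × Fin (n+1) → ℝ) : (Mof a).mulVec (cvec a) = 0 := by
  funext i
  set B : Matrix (Fin (n+1)) (Fin (n+1)) ℝ :=
    Matrix.of (Fin.snoc (α := fun _ : Fin (n+1) => Fin (n+1) → ℝ) (fun k => Mof a k) (Mof a i))
    with hB
  have hBlastrow : B (Fin.last n) = Mof a i := by
    show (Fin.snoc (α := fun _ : Fin (n+1) => Fin (n+1) → ℝ) (fun k => Mof a k) (Mof a i)) (Fin.last n) = Mof a i
    exact Fin.snoc_last _ _
  have hBcrow : ∀ k : Fin n, B (Fin.castSucc k) = Mof a k := by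
    intro k
    show (Fin.snoc (α := fun _ : Fin (n+1) => Fin (n+1) → ℝ) (fun k => Mof a k) (Mof a i)) (Fin.castSucc k) = Mof a k
    exact Fin.snoc_castSucc _ _ _
  have hrow : B.det = 0 := by
    apply Matrix.det_zero_of_row_eq (i := Fin.castSucc i) (j := Fin.last n)
    · exact Fin.ne_of_lt (Fin.castSucc_lt_last i)
    · rw [hBlastrow, hBcrow]
  have hexp := Matrix.det_succ_row B (Fin.last n)
  rw [hrow] at hexp
  have hBsub : ∀ j : Fin (n+1),
      B.submatrix (Fin.last n).succAbove j.succAbove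
        = (Mof a).submatrix id j.succAbove := by
    intro j
    ext k l
    rw [Fin.succAbove_last, Matrix.submatrix_apply, Matrix.submatrix_apply, hBcrow]
    rfl
  have key : ∑ j : Fin (n+1), (-1:ℝ)^(n + (j:ℕ)) * Mof a i j
      * ((Mof a).submatrix id j.succAbove).det = 0 := by
    calc ∑ j : Fin (n+1), (-1:ℝ)^(n + (j:ℕ)) * Mof a i j
        * ((Mof a).submatrix id j.succAbove).det
        = ∑ j : Fin (n+1), (-1:ℝ)^((Fin.last n : ℕ) + (j:ℕ)) * B (Fin.last n) j
          * (B.submatrix (Fin.last n).succAbove j.succAbove).det := by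
          apply Finset.sum_congr rfl
          intro j _
          rw [hBlastrow, hBsub j, Fin.val_last]
      _ = 0 := hexp.symm
  show ∑ j, Mof a i j * cvec a j = 0
  have expand : ∑ j, Mof a i j * cvec a j
      = (-1:ℝ)^(n : ℕ) * ∑ j : Fin (n+1), (-1:ℝ)^(n + (j:ℕ)) * Mof a i j
        * ((Mof a).submatrix id j.succAbove).det := by
    rw [Finset.mul_sum]
    apply Finset.sum_congr rfl
    intro j _
    have h2 : ((-1:ℝ)^n)*((-1:ℝ)^n) = 1 := by
      rw [← pow_add, ← two_mul, pow_mul]; norm_num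
    rw [cvec, pow_add]
    linear_combination (-((-1:ℝ)^(j:ℕ) * Mof a i j
      * ((Mof a).submatrix id j.succAbove).det)) * h2
  rw [expand, key, mul_zero]
end Alg

section Alg2
variable {n : ℕ}

lemma cvec_flip (ε : Fin (n+1) → ℝ) (hε : ∀ j, ε j = 1 ∨ ε j = -1)
    (a : Fin n × Fin (n+1) → ℝ) (j : Fin (n+1)) :
    cvec (fun p => ε p.2 * a p) j = (∏ k, ε k) * (ε j * cvec a j) := by
  have hsub : (Mof (fun p => ε p.2 * a p)).submatrix id j.succAbove
      = Matrix.of (fun i k => ε (j.succAbove k) *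
          ((Mof a).submatrix id j.succAbove) i k) := by
    ext i k; rfl
  have hdet : ((Mof (fun p => ε p.2 * a p)).submatrix id j.succAbove).det
      = (∏ k, ε (j.succAbove k)) * ((Mof a).submatrix id j.succAbove).det := by
    rw [hsub]
    exact Matrix.det_mul_row _ _
  have hprod : ∏ k, ε (j.succAbove k) = ε j * ∏ k, ε k := by
    have h := Fin.prod_univ_succAbove ε j
    have hj2 : ε j * ε j = 1 := by rcases hε j with h' | h' <;> rw [h'] <;> norm_num
    calc ∏ k, ε (j.succAbove k) = (ε j * ε j) * ∏ k, ε (j.succAbove k) := by rw [hj2, one_mul]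
      _ = ε j * (ε j * ∏ k, ε (j.succAbove k)) := by ring
      _ = ε j * ∏ k, ε k := by rw [← h]
  rw [cvec, hdet, hprod, cvec]
  ring

lemma cvec_ne_zero_null (μ : Measure ℝ) [IsProbabilityMeasure μ] [NullSingletonClass μ] (j : Fin (n+1)) :
    Measure.pi (fun _ : Fin n × Fin (n+1) => μ) {a | cvec a j = 0} = 0 := by
  classical
  set Pj : MvPolynomial (Fin n × Fin (n+1)) ℝ :=
    (Matrix.of fun i k : Fin n =>
      (MvPolynomial.X (i, j.succAbove k) : MvPolynomial (Fin n × Fin (n+1)) ℝ)).det with hPj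
  have heval : ∀ a, MvPolynomial.eval a Pj = ((Mof a).submatrix id j.succAbove).det := by
    intro a
    rw [hPj, RingHom.map_det]
    congr 1
    ext i k
    simp [Matrix.map_apply, Mof]
  have hPne : Pj ≠ 0 := by
    intro h
    have : MvPolynomial.eval (fun p => if p.2 = j.succAbove p.1 then (1:ℝ) else 0) Pj = 0 := by
      rw [h]; simp
    rw [heval] at this
    have hid : (Mof (fun p => if p.2 = j.succAbove p.1 then (1:ℝ) else 0)).submatrix
        id j.succAbove = 1 := by
      ext i k
      show (if j.succAbove k = j.succAbove i then (1:ℝ) else 0) = _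
      rw [Matrix.one_apply]
      by_cases hik : i = k
      · simp [hik]
      · rw [if_neg hik, if_neg (fun h' => hik ((Fin.succAbove_right_injective h')).symm)]
    rw [hid, Matrix.det_one] at this
    exact one_ne_zero this
  have hset : {a : Fin n × Fin (n+1) → ℝ | cvec a j = 0}
      = {a | MvPolynomial.eval a Pj = 0} := by
    ext a
    simp only [Set.mem_setOf_eq, heval, cvec, mul_eq_zero]
    constructor
    · rintro (h | h)
      · exact absurd h (by positivity)
      · exact h
    · intro h; exact Or.inr h
  rw [hset]
  exact poly_null μ Pj hPne
end Alg2
section Rank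
variable {n : ℕ}

lemma mulVec_cons_zero (M : Matrix (Fin n) (Fin (n+1)) ℝ) (z : Fin n → ℝ) :
    M.mulVec (Fin.cons 0 z) = (M.submatrix id Fin.succ).mulVec z := by
  funext i
  show ∑ j, M i j * (Fin.cons 0 z : Fin (n+1) → ℝ) j = ∑ k, M i (Fin.succ k) * z k
  rw [Fin.sum_univ_succ]
  simp

lemma rank_of_cvec0 (a : Fin n × Fin (n+1) → ℝ) (h0 : cvec a 0 ≠ 0) :
    (Mof a).rank = n := by
  set B := (Mof a).submatrix id Fin.succ with hBdef
  have hdet : B.det ≠ 0 := by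
    intro h
    apply h0
    rw [cvec]
    have : (0 : Fin (n+1)).succAbove = Fin.succ := Fin.succAbove_zero
    rw [this]
    simp [hBdef] at h ⊢
    exact h
  have hunit : IsUnit B.det := isUnit_iff_ne_zero.mpr hdet
  have hsurj : Function.Surjective (Mof a).mulVecLin := by
    intro y
    refine ⟨Fin.cons 0 (B⁻¹.mulVec y), ?_⟩
    show (Mof a).mulVec _ = y
    rw [mulVec_cons_zero, ← hBdef, Matrix.mulVec_mulVec, Matrix.mul_nonsing_inv B hunit,
      Matrix.one_mulVec]
  rw [Matrix.rank, LinearMap.range_eq_top.mpr hsurj, finrank_top]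
  simp [Module.finrank_pi]

lemma mem_span_cvec (a : Fin n × Fin (n+1) → ℝ) (h0 : cvec a 0 ≠ 0)
    (x : Fin (n+1) → ℝ) (hx : (Mof a).mulVec x = 0) :
    ∃ t : ℝ, x = t • cvec a := by
  have hcne : cvec a ≠ 0 := fun h => h0 (by rw [h]; rfl)
  set K := LinearMap.ker (Mof a).mulVecLin with hK
  have hcK : cvec a ∈ K := by
    rw [hK, LinearMap.mem_ker]
    exact mulVec_cvec a
  have hxK : x ∈ K := by rw [hK, LinearMap.mem_ker]; exact hx
  have hfr : Module.finrank ℝ K = 1 := by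
    have hrn := LinearMap.finrank_range_add_finrank_ker (Mof a).mulVecLin
    have hrank : Module.finrank ℝ (LinearMap.range (Mof a).mulVecLin) = n := by
      rw [← Matrix.rank]; exact rank_of_cvec0 a h0
    rw [hrank] at hrn
    simp only [Module.finrank_pi, Fintype.card_fin] at hrn
    rw [hK]
    omega
  have hspan : Submodule.span ℝ {cvec a} = K := by
    apply Submodule.eq_of_le_of_finrank_eq
    · rw [Submodule.span_le, Set.singleton_subset_iff]; exact hcK
    · rw [hfr, finrank_span_singleton hcne]
  have : x ∈ Submodule.span ℝ {cvec a} := hspan.symm ▸ hxK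
  obtain ⟨t, ht⟩ := Submodule.mem_span_singleton.mp this
  exact ⟨t, ht.symm⟩

lemma simplex_of_sign (a : Fin n × Fin (n+1) → ℝ)
    (h : ∀ j, 0 < cvec a j * cvec a 0) :
    ∃ x ∈ stdSimplex ℝ (Fin (n+1)), (Mof a).mulVec x = 0 := by
  set c := cvec a with hc
  set s := ∑ j, c j with hs
  have hsame : (∀ j, 0 < c j) ∨ (∀ j, c j < 0) := by
    rcases lt_or_gt_of_ne (fun h' : c 0 = 0 => by simpa [h'] using h 0) with hneg | hpos
    · right
      intro j
      rcases mul_pos_iff.mp (h j) with ⟨_, h2⟩ | ⟨h1, _⟩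
      · exact absurd h2 (not_lt.mpr hneg.le)
      · exact h1
    · left
      intro j
      rcases mul_pos_iff.mp (h j) with ⟨h1, _⟩ | ⟨_, h2⟩
      · exact h1
      · exact absurd hpos (not_lt.mpr h2.le)
  have hsne : s ≠ 0 ∧ ∀ j, 0 ≤ c j / s := by
    rcases hsame with hp | hn
    · have : 0 < s := Finset.sum_pos (fun j _ => hp j) Finset.univ_nonempty
      exact ⟨this.ne', fun j => le_of_lt (div_pos (hp j) this)⟩
    · have : s < 0 := Finset.sum_neg (fun j _ => hn j) Finset.univ_nonempty
      exact ⟨this.ne, fun j => le_of_lt (div_pos_of_neg_of_neg (hn j) this)⟩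
  refine ⟨fun j => c j / s, ⟨fun j => hsne.2 j, ?_⟩, ?_⟩
  · rw [← Finset.sum_div, ← hs, div_self hsne.1]
  · have : (fun j => c j / s) = s⁻¹ • c := by
      funext j; simp [div_eq_inv_mul]
    rw [this, Matrix.mulVec_smul, hc, mulVec_cvec a, smul_zero]

lemma sign_of_simplex (a : Fin n × Fin (n+1) → ℝ) (hN : ∀ j, cvec a j ≠ 0)
    (x : Fin (n+1) → ℝ) (hx : x ∈ stdSimplex ℝ (Fin (n+1)))
    (h0 : (Mof a).mulVec x = 0) : ∀ j, 0 < cvec a j * cvec a 0 := by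
  obtain ⟨t, ht⟩ := mem_span_cvec a (hN 0) x h0
  obtain ⟨hxnn, hxsum⟩ := hx
  have htne : t ≠ 0 := by
    rintro rfl
    rw [zero_smul] at ht
    rw [ht] at hxsum
    simpa using hxsum
  have hxj : ∀ j, 0 < x j := by
    intro j
    rcases lt_or_eq_of_le (hxnn j) with h | h
    · exact h
    · exfalso
      apply hN j
      have : x j = t * cvec a j := by rw [ht]; rfl
      rw [← h] at this
      rcases mul_eq_zero.mp this.symm with h' | h'
      · exact absurd h' htne
      · exact h'
  intro j
  have hcj : cvec a j = x j / t := by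
    have : x j = t * cvec a j := by rw [ht]; rfl
    field_simp [this]
    linear_combination -this
  have hc0 : cvec a 0 = x 0 / t := by
    have : x 0 = t * cvec a 0 := by rw [ht]; rfl
    field_simp [this]
    linear_combination -this
  rw [hcj, hc0, div_mul_div_comm]
  exact div_pos (mul_pos (hxj j) (hxj 0)) (mul_self_pos.mpr htne)
end Rank
section Main
variable {n : ℕ}

/-- sign vector from boolean pattern, first coordinate fixed to `+1` -/
def epsb (b : Fin n → Bool) : Fin (n+1) → ℝ :=
  Fin.cons 1 (fun i => if b i then 1 else -1)

lemma epsb_pm (b : Fin n → Bool) : ∀ j, epsb b j = 1 ∨ epsb b j = -1 := by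
  intro j
  refine Fin.cases ?_ ?_ j
  · left; rfl
  · intro i
    show (if b i then (1:ℝ) else -1) = 1 ∨ (if b i then (1:ℝ) else -1) = -1
    by_cases h : b i <;> simp [h]

lemma epsb_zero (b : Fin n → Bool) : epsb b 0 = 1 := rfl

lemma epsb_succ (b : Fin n → Bool) (i : Fin n) :
    epsb b i.succ = if b i then 1 else -1 := by
  simp [epsb]

/-- sign-pattern events -/
def Dset (ε : Fin (n+1) → ℝ) : Set (Fin n × Fin (n+1) → ℝ) :=
  {a | ∀ j, 0 < ε j * (cvec a j * cvec a 0)}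

lemma measurableSet_Dset (ε : Fin (n+1) → ℝ) : MeasurableSet (Dset ε) := by
  have : Dset ε = ⋂ j, (fun a => ε j * (cvec a j * cvec a 0)) ⁻¹' Set.Ioi 0 := by
    ext a; simp [Dset, Set.mem_iInter]
  rw [this]
  exact MeasurableSet.iInter fun j =>
    ((continuous_const.mul ((continuous_cvec j).mul (continuous_cvec 0))).measurable
      measurableSet_Ioi)

lemma Dset_ne (ε : Fin (n+1) → ℝ) {a : Fin n × Fin (n+1) → ℝ} (ha : a ∈ Dset ε) :
    ∀ j, cvec a j ≠ 0 := by
  intro j hj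
  have := ha j
  rw [hj] at this
  simp at this

lemma flip_preimage_Dset (b : Fin n → Bool) :
    (fun a : Fin n × Fin (n+1) → ℝ => fun p => epsb b p.2 * a p) ⁻¹' Dset (epsb (fun _ => true))
      = Dset (epsb b) := by
  have hsq : (∏ k, epsb b k) * (∏ k, epsb b k) = 1 := by
    rw [← Finset.prod_mul_distrib]
    apply Finset.prod_eq_one
    intro j _
    rcases epsb_pm b j with h | h <;> rw [h] <;> norm_num
  have h1 : ∀ j : Fin (n+1), epsb (fun _ => true) j = (1:ℝ) := by
    intro j
    refine Fin.cases rfl (fun i => ?_) j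
    rw [epsb_succ]; simp
  ext a
  simp only [Set.mem_preimage, Dset, Set.mem_setOf_eq]
  have hflip : ∀ j, cvec (fun p => epsb b p.2 * a p) j
      = (∏ k, epsb b k) * (epsb b j * cvec a j) := cvec_flip (epsb b) (epsb_pm b) a
  constructor
  · intro h j
    have := h j
    rw [h1 j, one_mul, hflip j, hflip 0, epsb_zero] at this
    calc (0:ℝ) < ((∏ k, epsb b k) * (epsb b j * cvec a j))
        * ((∏ k, epsb b k) * (1 * cvec a 0)) := this
      _ = ((∏ k, epsb b k) * (∏ k, epsb b k)) * (epsb b j * (cvec a j * cvec a 0)) := by ring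
      _ = epsb b j * (cvec a j * cvec a 0) := by rw [hsq, one_mul]
  · intro h j
    rw [h1 j, one_mul, hflip j, hflip 0, epsb_zero]
    calc (0:ℝ) < epsb b j * (cvec a j * cvec a 0) := h j
      _ = ((∏ k, epsb b k) * (∏ k, epsb b k)) * (epsb b j * (cvec a j * cvec a 0)) := by
          rw [hsq, one_mul]
      _ = ((∏ k, epsb b k) * (epsb b j * cvec a j))
          * ((∏ k, epsb b k) * (1 * cvec a 0)) := by ring

lemma nu_Dset_one (μ : Measure ℝ) [IsProbabilityMeasure μ] [NullSingletonClass μ]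
    (hsymm : Measure.map (fun x : ℝ => -x) μ = μ) :
    Measure.pi (fun _ : Fin n × Fin (n+1) => μ) (Dset (epsb (fun _ => true)))
      = (1/2 : ENNReal)^n := by
  classical
  set ν := Measure.pi (fun _ : Fin n × Fin (n+1) => μ) with hν
  set N := {a : Fin n × Fin (n+1) → ℝ | ∀ j, cvec a j ≠ 0} with hNdef
  have hNmeas : MeasurableSet N := by
    have : N = ⋂ j, (fun a => cvec a j) ⁻¹' ({0}ᶜ) := by
      ext a; simp [hNdef, Set.mem_iInter]
    rw [this]
    exact MeasurableSet.iInter fun j =>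
      (continuous_cvec j).measurable (measurableSet_singleton 0).compl
  have hNc : ν Nᶜ = 0 := by
    have hsub : Nᶜ ⊆ ⋃ j, {a | cvec a j = 0} := by
      intro a ha
      simp only [hNdef, Set.mem_compl_iff, Set.mem_setOf_eq, not_forall, not_not] at ha
      obtain ⟨j, hj⟩ := ha
      exact Set.mem_iUnion.mpr ⟨j, hj⟩
    exact measure_mono_null hsub (measure_iUnion_null fun j => cvec_ne_zero_null μ j)
  have hN1 : ν N = 1 := (prob_compl_eq_zero_iff hNmeas).mp hNc
  have hcover : N = ⋃ b : Fin n → Bool, Dset (epsb b) := by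
    ext a
    constructor
    · intro ha
      refine Set.mem_iUnion.mpr ⟨fun i => decide (0 < cvec a i.succ * cvec a 0), ?_⟩
      intro j
      refine Fin.cases ?_ ?_ j
      · rw [epsb_zero, one_mul]
        exact mul_self_pos.mpr (ha 0)
      · intro i
        rw [epsb_succ]
        by_cases h : 0 < cvec a i.succ * cvec a 0
        · rw [if_pos (by simpa using h), one_mul]
          exact h
        · rw [if_neg (by simpa using h)]
          have hne : cvec a i.succ * cvec a 0 ≠ 0 := mul_ne_zero (ha i.succ) (ha 0)
          have : cvec a i.succ * cvec a 0 < 0 := lt_of_le_of_ne (not_lt.mp h) hne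
          linarith
    · intro ha
      obtain ⟨b, hb⟩ := Set.mem_iUnion.mp ha
      exact Dset_ne _ hb
  have hdisj : Pairwise (Function.onFun Disjoint (fun b : Fin n → Bool => Dset (epsb b))) := by
    intro b b' hne
    rw [Function.onFun, Set.disjoint_left]
    intro a hab hab'
    have : ∃ i, b i ≠ b' i := by
      by_contra h
      push_neg at h
      exact hne (funext h)
    obtain ⟨i, hi⟩ := this
    have h1 := hab i.succ
    have h2 := hab' i.succ
    rw [epsb_succ] at h1 h2
    cases hbi : b i <;> cases hbi' : b' i <;> rw [hbi] at h1 hi <;> rw [hbi'] at h2 hi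
    · exact hi rfl
    · simp only [if_neg (by simp : ¬ (false = true)), if_pos rfl, if_true, one_mul,
        neg_one_mul] at h1 h2
      linarith
    · simp only [if_neg (by simp : ¬ (false = true)), if_pos rfl, if_true, one_mul,
        neg_one_mul] at h1 h2
      linarith
    · exact hi rfl
  have heach : ∀ b : Fin n → Bool, ν (Dset (epsb b)) = ν (Dset (epsb (fun _ => true))) := by
    intro b
    have hp := flip_preserving (ι := Fin n × Fin (n+1)) μ hsymm (fun p => epsb b p.2)
      (fun p => epsb_pm b p.2)
    rw [← flip_preimage_Dset b]
    exact hp.measure_preimage (measurableSet_Dset _).nullMeasurableSet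
  have hsum : (1:ENNReal) = ∑ b : Fin n → Bool, ν (Dset (epsb b)) := by
    rw [← hN1, hcover, measure_iUnion hdisj (fun b => measurableSet_Dset _), tsum_fintype]
  have hcount : (1:ENNReal) = (2:ENNReal)^n * ν (Dset (epsb (fun _ => true))) := by
    rw [hsum]
    rw [Finset.sum_congr rfl (fun b _ => heach b), Finset.sum_const, Finset.card_univ]
    rw [nsmul_eq_mul]
    congr 1
    rw [Fintype.card_fun]
    simp
  have hhalf : ((1:ENNReal)/2) * 2 = 1 := by
    rw [one_div]
    exact ENNReal.inv_mul_cancel two_ne_zero ENNReal.ofNat_ne_top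
  calc ν (Dset (epsb (fun _ => true)))
      = (((1:ENNReal)/2) * 2)^n * ν (Dset (epsb (fun _ => true))) := by
        rw [hhalf, one_pow, one_mul]
    _ = (1/2:ENNReal)^n * ((2:ENNReal)^n * ν (Dset (epsb (fun _ => true)))) := by
        rw [mul_pow, mul_assoc]
    _ = (1/2:ENNReal)^n := by rw [← hcount, mul_one]
end Main
section EvSec
variable {n : ℕ}

/-- the event that the kernel meets the simplex -/
def Ev (n : ℕ) : Set (Fin n × Fin (n+1) → ℝ) :=
  {a | ∃ x ∈ stdSimplex ℝ (Fin (n+1)), (Mof a).mulVec x = 0}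

lemma isClosed_Ev : IsClosed (Ev n) := by
  have heq : Ev n = Prod.snd ''
      {q : (stdSimplex ℝ (Fin (n+1))) × (Fin n × Fin (n+1) → ℝ) |
        (Mof q.2).mulVec (q.1 : Fin (n+1) → ℝ) = 0} := by
    ext a
    constructor
    · rintro ⟨x, hx, hmul⟩
      exact ⟨(⟨x, hx⟩, a), hmul, rfl⟩
    · rintro ⟨⟨x, a'⟩, hq, rfl⟩
      exact ⟨x, x.2, hq⟩
  rw [heq]
  have hcs : CompactSpace (stdSimplex ℝ (Fin (n+1))) :=
    isCompact_iff_compactSpace.mp (isCompact_stdSimplex _ _)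
  apply isClosedMap_snd_of_compactSpace
  have hcont : Continuous fun q : (stdSimplex ℝ (Fin (n+1))) × (Fin n × Fin (n+1) → ℝ) =>
      (Mof q.2).mulVec (q.1 : Fin (n+1) → ℝ) := by
    apply continuous_pi
    intro i
    show Continuous fun q : (stdSimplex ℝ (Fin (n+1))) × (Fin n × Fin (n+1) → ℝ) =>
      ∑ j, Mof q.2 i j * (q.1 : Fin (n+1) → ℝ) j
    apply continuous_finset_sum
    intro j _
    exact ((continuous_apply ((i, j) : Fin n × Fin (n+1))).comp continuous_snd).mul
      (((continuous_apply j).comp continuous_subtype_val).comp continuous_fst)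
  exact isClosed_eq hcont continuous_const

lemma Ev_inter (a : Fin n × Fin (n+1) → ℝ) (hN : ∀ j, cvec a j ≠ 0) :
    a ∈ Ev n ↔ a ∈ Dset (epsb (fun _ => true)) := by
  have h1 : ∀ j : Fin (n+1), epsb (fun _ : Fin n => true) j = (1:ℝ) := by
    intro j
    refine Fin.cases rfl (fun i => ?_) j
    rw [epsb_succ]; simp
  constructor
  · rintro ⟨x, hx, hmul⟩
    intro j
    rw [h1 j, one_mul]
    exact sign_of_simplex a hN x hx hmul j
  · intro h
    apply simplex_of_sign
    intro j
    have := h j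
    rwa [h1 j, one_mul] at this

lemma nu_Ev (μ : Measure ℝ) [IsProbabilityMeasure μ] [NullSingletonClass μ]
    (hsymm : Measure.map (fun x : ℝ => -x) μ = μ) :
    Measure.pi (fun _ : Fin n × Fin (n+1) => μ) (Ev n) = (1/2 : ENNReal)^n := by
  set ν := Measure.pi (fun _ : Fin n × Fin (n+1) => μ) with hν
  set N := {a : Fin n × Fin (n+1) → ℝ | ∀ j, cvec a j ≠ 0} with hNdef
  have hNc : ν Nᶜ = 0 := by
    have hsub : Nᶜ ⊆ ⋃ j, {a | cvec a j = 0} := by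
      intro a ha
      simp only [hNdef, Set.mem_compl_iff, Set.mem_setOf_eq, not_forall, not_not] at ha
      obtain ⟨j, hj⟩ := ha
      exact Set.mem_iUnion.mpr ⟨j, hj⟩
    exact measure_mono_null hsub (measure_iUnion_null fun j => cvec_ne_zero_null μ j)
  have hEN : Ev n ∩ N = Dset (epsb (fun _ => true)) := by
    ext a
    constructor
    · rintro ⟨hE, hn⟩
      exact (Ev_inter a hn).mp hE
    · intro h
      have hn : a ∈ N := Dset_ne _ h
      exact ⟨(Ev_inter a hn).mpr h, hn⟩
  calc ν (Ev n) = ν (Ev n ∩ N) := (measure_inter_conull hNc).symm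
    _ = ν (Dset (epsb (fun _ => true))) := by rw [hEN]
    _ = (1/2 : ENNReal)^n := nu_Dset_one μ hsymm
end EvSec


/-- Random `(m-1) × m` drift matrix: if the entries of `A` are i.i.d. with a common
atomless law `μ` that is symmetric about `0`, then almost surely `rank A = m - 1`
(so the kernel is one-dimensional), and the probability that the kernel of `A`
meets the standard simplex `Δ^m` equals `2^{1-m}`. -/
theorem random_drift_kernel_hits_simplex
    {Ω : Type*} {mΩ : MeasurableSpace Ω} (P : Measure Ω) [IsProbabilityMeasure P]
    (m : ℕ) (hm : 2 ≤ m)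
    (μ : Measure ℝ) [IsProbabilityMeasure μ] [NullSingletonClass μ]
    (hsymm : Measure.map (fun x : ℝ => -x) μ = μ)
    (A : Ω → Matrix (Fin (m-1)) (Fin m) ℝ)
    (hmeas : ∀ i j, Measurable (fun ω => A ω i j))
    (hindep : iIndepFun
      (fun p : Fin (m-1) × Fin m => fun ω => A ω p.1 p.2) P)
    (hdist : ∀ i j, Measure.map (fun ω => A ω i j) P = μ) :
    (∀ᵐ ω ∂P, (A ω).rank = m - 1) ∧
    P {ω | ∃ x ∈ stdSimplex ℝ (Fin m), (A ω).mulVec x = 0}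
      = (1/2 : ENNReal) ^ (m - 1) := by
  obtain ⟨n, rfl⟩ : ∃ n, m = n + 1 := ⟨m - 1, by omega⟩
  have hmeas' : ∀ (i : Fin n) (j : Fin (n+1)), Measurable (fun ω => A ω i j) := hmeas
  have hdist' : ∀ (i : Fin n) (j : Fin (n+1)), Measure.map (fun ω => A ω i j) P = μ := hdist
  have hindep' : iIndepFun
      (fun p : Fin n × Fin (n+1) => fun ω => A ω p.1 p.2) P := hindep
  clear hindep hdist hmeas
  set X : Ω → (Fin n × Fin (n+1) → ℝ) := fun ω p => A ω p.1 p.2 with hXdef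
  have hXmeas : Measurable X := measurable_pi_lambda _ fun p => hmeas' p.1 p.2
  set ν := Measure.pi (fun _ : Fin n × Fin (n+1) => μ) with hν
  have hjoint : Measure.map X P = ν := by
    rw [hν]
    refine (Measure.pi_eq fun s hs => ?_).symm
    rw [Measure.map_apply hXmeas (MeasurableSet.univ_pi hs)]
    have hpre : X ⁻¹' Set.pi Set.univ s
        = ⋂ p ∈ Finset.univ, (fun ω => A ω p.1 p.2) ⁻¹' s p := by
      ext ω
      simp [hXdef, Set.mem_pi]
    rw [hpre, iIndepFun_iff_measure_inter_preimage_eq_mul.mp hindep' Finset.univ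
      (fun p _ => hs p)]
    refine Finset.prod_congr rfl fun p _ => ?_
    rw [← Measure.map_apply (hmeas' p.1 p.2) (hs p), hdist' p.1 p.2]
  have hMof : ∀ ω, Mof (X ω) = A ω := fun ω => rfl
  constructor
  · have hset : MeasurableSet {a : Fin n × Fin (n+1) → ℝ | cvec a 0 = 0} :=
      (continuous_cvec 0).measurable (measurableSet_singleton 0)
    have hnull : P (X ⁻¹' {a | cvec a 0 = 0}) = 0 := by
      rw [← Measure.map_apply hXmeas hset, hjoint]
      exact cvec_ne_zero_null μ 0
    have hae : ∀ᵐ ω ∂P, cvec (X ω) 0 ≠ 0 := by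
      rw [ae_iff]
      convert hnull using 2
      ext ω
      simp
    filter_upwards [hae] with ω hω
    have := rank_of_cvec0 (X ω) hω
    rw [hMof ω] at this
    show (A ω).rank = n + 1 - 1
    omega
  · have hset : {ω | ∃ x ∈ stdSimplex ℝ (Fin (n+1)), (A ω).mulVec x = 0} = X ⁻¹' Ev n := by
      ext ω
      exact Iff.rfl
    rw [hset, ← Measure.map_apply hXmeas isClosed_Ev.measurableSet, hjoint,
      nu_Ev μ hsymm, Nat.add_sub_cancel]
end

section
/- Let n ≥ 1, let p ∈ ℝ^n satisfy p_i ≥ 0 for all i and Σ_{i=1}^n p_i ≤ 1, and let x ∈ ℝ^n. Then Σ_{i=1}^n p_i x_i² − (Σ_{i=1}^n p_i x_i)² ≤ (1/2) Σ_{i=1}^n x_i². Equivalently, the symmetric matrix diag(p) − p pᵀ is positive semidefinite with operator norm at most 1/2. -/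
set_option autoImplicit false

lemma softmax_aux_key (P a r t : ℝ) (hP : 1/2 < P) (hP1 : P ≤ 1) (ht : 0 ≤ t)
    (hr : r ^ 2 ≤ (1 - P) ^ 2 * t) :
    (P - 1/2) * a ^ 2 ≤ (P * a + r) ^ 2 + (P - 1/2) * t := by
  rcases eq_or_lt_of_le hP1 with h1 | h1
  · have hr0 : r = 0 := by
      have : r ^ 2 ≤ 0 := by rw [← h1] at hr; simpa using hr
      exact pow_eq_zero_iff (n := 2) (by norm_num) |>.mp (le_antisymm this (sq_nonneg r))
    rw [← h1, hr0]
    nlinarith [sq_nonneg a]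
  · have hq : (0:ℝ) < 1 - P := by linarith
    nlinarith [mul_pos hq hq, sq_nonneg ((1 - P) * a + r),
      mul_nonneg (sq_nonneg (P - 1/2)) (sq_nonneg ((1 - P) * a - r)),
      mul_nonneg (by linarith : (0:ℝ) ≤ P - 1/2)
        (by nlinarith [hr] : (0:ℝ) ≤ (1 - P) ^ 2 * t - r ^ 2)]

/-- Spectral bound for the softmax Hessian `diag(p) − p pᵀ`: if `pᵢ ≥ 0` and
`∑ pᵢ ≤ 1`, then for every `x ∈ ℝⁿ` the quadratic form
`∑ pᵢ xᵢ² − (∑ pᵢ xᵢ)²` is nonnegative (positive semidefiniteness) and bounded by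
`(1/2) ∑ xᵢ²` (operator norm at most `1/2`). -/
theorem softmax_hessian_psd_norm_bound
    (n : ℕ) (hn : 1 ≤ n) (p x : Fin n → ℝ)
    (hp : ∀ i, 0 ≤ p i) (hsum : ∑ i, p i ≤ 1) :
    0 ≤ ∑ i, p i * x i ^ 2 - (∑ i, p i * x i) ^ 2 ∧
    ∑ i, p i * x i ^ 2 - (∑ i, p i * x i) ^ 2 ≤ (1/2) * ∑ i, x i ^ 2 := by
  constructor
  · -- PSD: Cauchy-Schwarz with f = √p, g = √p * x
    have hcs := Finset.sum_mul_sq_le_sq_mul_sq Finset.univ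
      (fun i => Real.sqrt (p i)) (fun i => Real.sqrt (p i) * x i)
    have h1 : ∀ i : Fin n, Real.sqrt (p i) * (Real.sqrt (p i) * x i) = p i * x i := by
      intro i; rw [← mul_assoc, Real.mul_self_sqrt (hp i)]
    have h2 : ∀ i : Fin n, Real.sqrt (p i) ^ 2 = p i := fun i => Real.sq_sqrt (hp i)
    have h3 : ∀ i : Fin n, (Real.sqrt (p i) * x i) ^ 2 = p i * x i ^ 2 := by
      intro i; rw [mul_pow, h2]
    simp only [h1, h2, h3] at hcs
    have hq : 0 ≤ ∑ i, p i * x i ^ 2 :=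
      Finset.sum_nonneg fun i _ => mul_nonneg (hp i) (sq_nonneg _)
    nlinarith [hcs, hq, hsum]
  · -- Norm bound
    by_cases hhalf : ∀ i, p i ≤ 1/2
    · have h : ∀ i : Fin n, p i * x i ^ 2 ≤ (1/2) * x i ^ 2 := fun i =>
        mul_le_mul_of_nonneg_right (hhalf i) (sq_nonneg _)
      have hle : ∑ i, p i * x i ^ 2 ≤ ∑ i, (1/2) * x i ^ 2 :=
        Finset.sum_le_sum (s := Finset.univ) (fun i _ => h i)
      rw [← Finset.mul_sum] at hle
      nlinarith [sq_nonneg (∑ i, p i * x i)]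
    · push_neg at hhalf
      obtain ⟨j, hj⟩ := hhalf
      -- split off coordinate j
      have hj1 : p j ≤ 1 := le_trans (Finset.single_le_sum (fun i _ => hp i) (Finset.mem_univ j)) hsum
      set s := Finset.univ.erase j with hs
      have hsplit : ∀ f : Fin n → ℝ, ∑ i, f i = f j + ∑ i ∈ s, f i := by
        intro f; rw [hs, Finset.add_sum_erase _ f (Finset.mem_univ j)]
      have hps : ∑ i ∈ s, p i ≤ 1 - p j := by
        have := hsplit p; linarith [hsum, this.symm.le, this.le]
      have hpi : ∀ i ∈ s, p i ≤ 1 - p j := by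
        intro i hi
        exact le_trans (Finset.single_le_sum (fun k _ => hp k) hi) hps
      -- Cauchy-Schwarz on the rest
      have hcs := Finset.sum_mul_sq_le_sq_mul_sq s p x
      have hpsq : ∑ i ∈ s, p i ^ 2 ≤ (1 - p j) ^ 2 := by
        calc ∑ i ∈ s, p i ^ 2 ≤ ∑ i ∈ s, (1 - p j) * p i := by
              refine Finset.sum_le_sum fun i hi => ?_
              rw [sq]
              exact mul_le_mul_of_nonneg_right (hpi i hi) (hp i)
          _ = (1 - p j) * ∑ i ∈ s, p i := by rw [Finset.mul_sum]
          _ ≤ (1 - p j) * (1 - p j) := by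
              exact mul_le_mul_of_nonneg_left hps (by linarith)
          _ = (1 - p j) ^ 2 := (sq _).symm
      set r := ∑ i ∈ s, p i * x i with hr
      set t := ∑ i ∈ s, x i ^ 2 with ht
      have htnn : 0 ≤ t := Finset.sum_nonneg fun i _ => sq_nonneg _
      have hr2 : r ^ 2 ≤ (1 - p j) ^ 2 * t := by
        calc r ^ 2 ≤ (∑ i ∈ s, p i ^ 2) * t := hcs
          _ ≤ (1 - p j) ^ 2 * t := mul_le_mul_of_nonneg_right hpsq htnn
      -- lower bound on the rest of the weighted square sum
      have hrest : ∑ i ∈ s, p i * x i ^ 2 ≤ (1 - p j) * t := by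
        calc ∑ i ∈ s, p i * x i ^ 2 ≤ ∑ i ∈ s, (1 - p j) * x i ^ 2 :=
              Finset.sum_le_sum fun i hi =>
                mul_le_mul_of_nonneg_right (hpi i hi) (sq_nonneg _)
          _ = (1 - p j) * t := by rw [Finset.mul_sum]
      have e1 : ∑ i, p i * x i ^ 2 = p j * x j ^ 2 + ∑ i ∈ s, p i * x i ^ 2 :=
        hsplit _
      have e2 : ∑ i, p i * x i = p j * x j + r := hsplit _
      have e3 : ∑ i, x i ^ 2 = x j ^ 2 + t := hsplit _
      rw [e1, e2, e3]
      set a := x j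
      set P := p j
      have hsr : ∑ i ∈ s, p i * x i ^ 2 ≤ (1 - P) * t := hrest
      -- goal: P*a^2 + rest - (P*a + r)^2 ≤ 1/2*(a^2 + t)
      have hkey := softmax_aux_key P a r t hj hj1 htnn hr2
      nlinarith [hkey, hsr]
end

section
/- Fix Δ_1 < 0 < Δ_2, let σ(s) = 1/(1+e^{−s}), g(s) = σ(s)Δ_1 + (1−σ(s))Δ_2, and let s* be the unique zero of g. Let Z be a real random variable (depending measurably on s) with E[Z] = g(s) and E[Z²] ≤ σ̄² for a finite constant σ̄² independent of s. Then there exist constants c > 0 and B < ∞, independent of s, such that for all s ∈ ℝ: E[(s + Z − s*)²] ≤ (s − s*)² − c·|s − s*| + B. -/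
set_option autoImplicit false

open MeasureTheory

/-- Foster–Lyapunov drift inequality with `V(s) = (s − s*)²` in the self-defeating
regime: if for each `s` the increment `Z s` has mean `g(s)` and second moment at most
`σ̄²`, then there are constants `c > 0` and `B < ∞`, independent of `s`, with
`E[(s + Z s − s*)²] ≤ (s − s*)² − c|s − s*| + B` for all `s`. -/
theorem self_defeating_lyapunov_drift
    {Ω : Type*} {mΩ : MeasurableSpace Ω} (P : Measure Ω) [IsProbabilityMeasure P]
    (Δ1 Δ2 : ℝ) (h1 : Δ1 < 0) (h2 : 0 < Δ2)
    (g : ℝ → ℝ)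
    (hg : g = fun s => (1 / (1 + Real.exp (-s))) * Δ1
      + (1 - 1 / (1 + Real.exp (-s))) * Δ2)
    (sstar : ℝ) (hsstar : g sstar = 0)
    (σbar2 : ℝ)
    (Z : ℝ → Ω → ℝ)
    (hint : ∀ s, Integrable (Z s) P)
    (hmean : ∀ s, ∫ ω, Z s ω ∂P = g s)
    (hsq : ∀ s, Integrable (fun ω => (Z s ω)^2) P)
    (hbound : ∀ s, ∫ ω, (Z s ω)^2 ∂P ≤ σbar2) :
    ∃ c > (0 : ℝ), ∃ B : ℝ, ∀ s : ℝ,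
      ∫ ω : Ω, (s + Z s ω - sstar)^2 ∂(P : Measure Ω) ≤ (s - sstar)^2 - c * |s - sstar| + B := by
  have hσpos : ∀ s : ℝ, (0:ℝ) < 1 + Real.exp (-s) := fun s => by positivity
  have hσlt : ∀ s : ℝ, 1 / (1 + Real.exp (-s)) ≤ 1 := fun s => by
    rw [div_le_one (hσpos s)]; linarith [Real.exp_pos (-s)]
  have hσgt : ∀ s : ℝ, 0 < 1 / (1 + Real.exp (-s)) := fun s => by positivity
  have hganti : StrictAnti g := by
    rw [hg]
    intro s t hst
    have h1' : Real.exp (-t) < Real.exp (-s) := Real.exp_lt_exp.2 (by linarith)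
    have hlt : 1 / (1 + Real.exp (-s)) < 1 / (1 + Real.exp (-t)) :=
      one_div_lt_one_div_of_lt (hσpos t) (by linarith)
    dsimp only
    nlinarith [hlt]
  have ha : 0 < -(g (sstar + 1)) := by
    have := hganti (show sstar < sstar + 1 by linarith)
    linarith [hsstar ▸ this]
  have hb : 0 < g (sstar - 1) := by
    have := hganti (show sstar - 1 < sstar by linarith)
    linarith [hsstar ▸ this]
  set a : ℝ := -(g (sstar + 1)) with ha_def
  set b : ℝ := g (sstar - 1) with hb_def
  set c : ℝ := min (2 * a) (2 * b) with hc_def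
  have hc : 0 < c := lt_min (by linarith) (by linarith)
  have hgbound : ∀ s : ℝ, |g s| ≤ |Δ1| + Δ2 := by
    intro s
    have hs1 := hσgt s
    have hs2 := hσlt s
    rw [abs_le]
    constructor
    · rw [hg]; dsimp only
      nlinarith [neg_abs_le Δ1, le_abs_self Δ1]
    · rw [hg]; dsimp only
      nlinarith [neg_abs_le Δ1, le_abs_self Δ1]
  refine ⟨c, hc, σbar2 + 2 * (|Δ1| + Δ2) + c, fun s => ?_⟩
  -- key drift bound
  have key : 2 * (s - sstar) * g s ≤ -(c * |s - sstar|) + (2 * (|Δ1| + Δ2) + c) := by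
    rcases le_or_gt (|s - sstar|) 1 with hsmall | hbig
    · have h1' : 2 * (s - sstar) * g s ≤ 2 * (|Δ1| + Δ2) := by
        have := hgbound s
        have habs : |2 * (s - sstar) * g s| ≤ 2 * (|Δ1| + Δ2) := by
          rw [abs_mul, abs_mul, abs_two]
          calc 2 * |s - sstar| * |g s| ≤ 2 * 1 * (|Δ1| + Δ2) := by
                apply mul_le_mul _ this (abs_nonneg _) (by positivity)
                nlinarith
            _ = 2 * (|Δ1| + Δ2) := by ring
        linarith [le_abs_self (2 * (s - sstar) * g s)]
      nlinarith [mul_le_mul_of_nonneg_left hsmall (le_of_lt hc), abs_nonneg (s - sstar)]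
    · rcases le_or_gt sstar s with hge | hlt
      · have habs : |s - sstar| = s - sstar := abs_of_nonneg (by linarith)
        have hs1 : sstar + 1 < s := by rw [habs] at hbig; linarith
        have hgs : g s < -a := by
          have := hganti hs1
          simpa [ha_def] using this
        have : 2 * (s - sstar) * g s ≤ 2 * (s - sstar) * (-a) := by
          apply mul_le_mul_of_nonneg_left (le_of_lt hgs)
          nlinarith
        have hca : c ≤ 2 * a := min_le_left _ _
        rw [habs]
        nlinarith [mul_le_mul_of_nonneg_right hca (show (0:ℝ) ≤ s - sstar by linarith),
          abs_nonneg Δ1]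
      · have habs : |s - sstar| = -(s - sstar) := abs_of_neg (by linarith)
        have hs1 : s < sstar - 1 := by rw [habs] at hbig; linarith
        have hgs : b < g s := hganti hs1
        have : 2 * (s - sstar) * g s ≤ 2 * (s - sstar) * b := by
          have hneg : s - sstar ≤ 0 := by linarith
          nlinarith
        have hcb : c ≤ 2 * b := min_le_right _ _
        rw [habs]
        nlinarith [mul_le_mul_of_nonneg_right hcb (show (0:ℝ) ≤ sstar - s by linarith),
          abs_nonneg Δ1]
  -- expand the integral
  have hexp : ∫ ω : Ω, (s + Z s ω - sstar)^2 ∂P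
      = (s - sstar)^2 + 2 * (s - sstar) * g s + ∫ ω, (Z s ω)^2 ∂P := by
    have heq : (fun ω => (s + Z s ω - sstar)^2)
        = fun ω => ((s - sstar)^2 + 2 * (s - sstar) * Z s ω) + (Z s ω)^2 := by
      funext ω; ring
    rw [heq, integral_add (by
        exact (integrable_const _).add ((hint s).const_mul _)) (hsq s),
      integral_add (integrable_const _) ((hint s).const_mul _),
      integral_const, integral_const_mul, hmean s]
    simp
  rw [hexp]
  have := hbound s
  linarith
end
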